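/- Fix 2 ≤ C < 7/3 and r ≥ 3. For n sufficiently large: if F ⊆ binom([n], r) is intersecting with |F| > binom(n-3, r-3), then Δ(F)/|F| ≥ (3C - 6)/C. Consequently (letting C → 7/3), every intersecting F ⊆ binom([n], r) with |F| > binom(n-3, r-3) satisfies Δ(F) ≥ (3/7)·|F| for n sufficiently large. -/

import Mathlib

open Finset

def FamIntersecting (F : Finset (Finset ℕ)) : Prop :=
  ∀ A ∈ F, ∀ B ∈ F, (A ∩ B).Nonempty

def maxDeg (F : Finset (Finset ℕ)) : ℕ :=
  (F.biUnion id).sup fun x => (F.filter fun E => x ∈ E).card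

def IsFlower (α : ℝ) (S : Finset (Finset ℕ)) (Y : Finset ℕ) : Prop :=
  S.Nonempty ∧ (∀ A ∈ S, Y ⊆ A) ∧ (∀ x, (∀ A ∈ S, x ∈ A) → x ∈ Y) ∧
    ∀ T : Finset ℕ, (T.card : ℝ) ≤ α → ∃ A ∈ S, (A \ Y) ∩ T = ∅

def IsFlowerCore (α : ℝ) (F : Finset (Finset ℕ)) (Y : Finset ℕ) : Prop :=
  Y.Nonempty ∧ ∃ S ⊆ F, IsFlower α S Y

open scoped Classical in
noncomputable def flowerBase (α : ℝ) (F : Finset (Finset ℕ)) : Finset (Finset ℕ) :=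
  (F.biUnion Finset.powerset).filter fun B =>
    (IsFlowerCore α F B ∨ B ∈ F) ∧
    ∀ B', (IsFlowerCore α F B' ∨ B' ∈ F) → B' ⊆ B → B' = B

noncomputable def tau (F : Finset (Finset ℕ)) : ℕ :=
  sInf {k | ∃ T : Finset ℕ, T.card = k ∧ ∀ A ∈ F, (A ∩ T).Nonempty}

/-!
If two points cover `F`, then `|F| ≤ 2Δ(F)`. Otherwise `F` has covering number at least 3, and
everything rests on a fact about 3-uniform intersecting families `H` with covering number 3: they
span at most 7 vertices (the Fano plane is extremal). Fix `S₀ ∈ H`; every vertex outside `S₀` lies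
in a petal `E \ S₀` of an edge `E` with `|E ∩ S₀| = 1`, and these 2-element petals live on at most
four points: either two petals with the same trace are disjoint, and all petals lie in their
union, or the petals pairwise intersect and hence form a triangle or a star, whose leaves are
pinned down by the edges avoiding the centre.

If `F` is 3-uniform, every member meets the 7-point span `W` of `F` in 3 points, so
`3|F| ≤ ∑_{x ∈ W} deg x ≤ 7Δ(F)`. If `r ≥ 4`, every member of `F` contains one of at most `r³`
triples; the heavy triples (in more than `r³·C(n-4, r-4)` members) meet every member of `F` and
each other. If two points cover them, `|F| ≤ 2Δ(F) + r⁶·C(n-4, r-4) ≤ 2Δ(F) + |F|/7`; otherwise the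
7-point argument applies to the heavy triples. So `3|F| ≤ 7Δ(F)`, and `(3C - 6)/C ≤ 3/7`.
-/

section TwoSets

variable {α : Type*} [DecidableEq α] {p e f g : Finset α}

theorem eq_of_mem_of_card_le_two (hp : #p ≤ 2) {x y z : α} (hx : x ∈ p) (hy : y ∈ p)
    (hz : z ∈ p) (hxy : x ≠ y) (hxz : x ≠ z) : y = z := by
  by_contra hyz
  exact (two_lt_card.2 ⟨x, hx, y, hy, z, hz, hxy, hxz, hyz⟩).not_ge hp

theorem subset_union_of_inter_nonempty (hp : #p ≤ 2) (he : (p ∩ e).Nonempty)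
    (hf : (p ∩ f).Nonempty) (hef : Disjoint (e ∩ f) p) : p ⊆ e ∪ f := by
  intro x hx
  by_contra hxef
  rw [mem_union, not_or] at hxef
  obtain ⟨y, hy⟩ := he
  obtain ⟨z, hz⟩ := hf
  rw [mem_inter] at hy hz
  have hyz : y = z := eq_of_mem_of_card_le_two hp hx hy.1 hz.1
    (ne_of_mem_of_not_mem hy.2 hxef.1).symm (ne_of_mem_of_not_mem hz.2 hxef.2).symm
  exact disjoint_left.1 hef (mem_inter.2 ⟨hy.2, hyz ▸ hz.2⟩) hy.1

theorem subset_union_union_of_inter_nonempty (hp : #p ≤ 2) (he : (p ∩ e).Nonempty)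
    (hf : (p ∩ f).Nonempty) (hg : (p ∩ g).Nonempty) (hefg : Disjoint (e ∩ f) g) :
    p ⊆ e ∪ f ∪ g := by
  intro x hx
  by_contra hx'
  simp only [mem_union, not_or] at hx'
  obtain ⟨y, hy⟩ := he
  obtain ⟨z, hz⟩ := hf
  obtain ⟨t, ht⟩ := hg
  rw [mem_inter] at hy hz ht
  have hyz : y = z := eq_of_mem_of_card_le_two hp hx hy.1 hz.1
    (ne_of_mem_of_not_mem hy.2 hx'.1.1).symm (ne_of_mem_of_not_mem hz.2 hx'.1.2).symm
  have hyt : y = t := eq_of_mem_of_card_le_two hp hx hy.1 ht.1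
    (ne_of_mem_of_not_mem hy.2 hx'.1.1).symm (ne_of_mem_of_not_mem ht.2 hx'.2).symm
  exact disjoint_left.1 hefg (mem_inter.2 ⟨hy.2, hyz ▸ hz.2⟩) (hyt ▸ ht.2)

theorem exists_forall_mem_or_card_le_three (P : Finset (Finset α))
    (h2 : ∀ p ∈ P, #p = 2) (hP : ∀ p ∈ P, ∀ q ∈ P, (p ∩ q).Nonempty) :
    (∃ π, ∀ p ∈ P, π ∈ p) ∨ ∃ Θ : Finset α, #Θ ≤ 3 ∧ ∀ p ∈ P, p ⊆ Θ := by
  rcases P.eq_empty_or_nonempty with rfl | ⟨e, he⟩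
  · exact Or.inr ⟨∅, by simp, by simp⟩
  obtain ⟨a, b, -, rfl⟩ := card_eq_two.1 (h2 e he)
  by_cases ha : ∀ p ∈ P, a ∈ p
  · exact Or.inl ⟨a, ha⟩
  by_cases hb : ∀ p ∈ P, b ∈ p
  · exact Or.inl ⟨b, hb⟩
  push Not at ha hb
  obtain ⟨g, hg, hag⟩ := ha
  obtain ⟨h, hh, hbh⟩ := hb
  have hegh : Disjoint ({a, b} ∩ g) h := by
    rw [disjoint_left]
    intro y hy hyh
    simp only [mem_inter, mem_insert, mem_singleton] at hy
    rcases hy with ⟨rfl | rfl, hyg⟩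
    exacts [hag hyg, hbh hyh]
  have hhsub : h ⊆ {a, b} ∪ g := subset_union_of_inter_nonempty (h2 h hh).le
    (hP h hh _ he) (hP h hh g hg) hegh
  refine Or.inr ⟨{a, b} ∪ g, ?_, fun p hp => ?_⟩
  · have := card_union_add_card_inter {a, b} g
    have := card_pos.2 (hP _ he g hg)
    have := h2 _ he
    have := h2 g hg
    omega
  · have := subset_union_union_of_inter_nonempty (h2 p hp).le (hP p hp _ he) (hP p hp g hg)
      (hP p hp h hh) hegh
    rwa [union_eq_left.2 hhsub] at this

end TwoSets

section ThreeUniform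

variable {α : Type*} [DecidableEq α] {H : Finset (Finset α)} {S₀ : Finset α}

theorem sdiff_inter_sdiff_nonempty {E E' S : Finset α} (h : (E ∩ E').Nonempty)
    (hS : Disjoint (E ∩ S) (E' ∩ S)) : ((E \ S) ∩ (E' \ S)).Nonempty := by
  obtain ⟨v, hv⟩ := h
  rw [mem_inter] at hv
  by_cases hvS : v ∈ S
  · exact (disjoint_left.1 hS (mem_inter.2 ⟨hv.1, hvS⟩) (mem_inter.2 ⟨hv.2, hvS⟩)).elim
  · exact ⟨v, by simp [hv.1, hv.2, hvS]⟩

theorem card_sdiff_le_two (h3 : ∀ E ∈ H, #E = 3) (hH : ∀ A ∈ H, ∀ B ∈ H, (A ∩ B).Nonempty)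
    (hS₀ : S₀ ∈ H) {E : Finset α} (hE : E ∈ H) : #(E \ S₀) ≤ 2 := by
  have := card_inter_add_card_sdiff E S₀
  have := card_pos.2 (hH E hE S₀ hS₀)
  have := h3 E hE
  omega

theorem exists_mem_card_inter_eq_one (h3 : ∀ E ∈ H, #E = 3)
    (hH : ∀ A ∈ H, ∀ B ∈ H, (A ∩ B).Nonempty)
    (hτ : ∀ T : Finset α, #T ≤ 2 → ∃ E ∈ H, Disjoint E T) (hS₀ : S₀ ∈ H)
    {E : Finset α} (hE : E ∈ H) {u : α} (hu : u ∈ E \ S₀) :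
    ∃ E' ∈ H, #(E' ∩ S₀) = 1 ∧ u ∈ E' := by
  by_cases h1 : #(E ∩ S₀) = 1
  · exact ⟨E, hE, h1, (mem_sdiff.1 hu).1⟩
  have hES := card_inter_add_card_sdiff E S₀
  have hSE := card_inter_add_card_sdiff S₀ E
  have := card_pos.2 (hH E hE S₀ hS₀)
  have := card_pos.2 ⟨u, hu⟩
  rw [h3 E hE] at hES
  rw [h3 S₀ hS₀, inter_comm] at hSE
  obtain ⟨G, hG, hGE⟩ := hτ (E ∩ S₀) (by omega)
  have hGS : G ∩ S₀ ⊆ S₀ \ E := fun v hv => by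
    rw [mem_inter] at hv
    exact mem_sdiff.2 ⟨hv.2, fun hvE => disjoint_left.1 hGE hv.1 (mem_inter.2 ⟨hvE, hv.2⟩)⟩
  refine ⟨G, hG, ?_, ?_⟩
  · have := card_le_card hGS
    have := card_pos.2 (hH G hG S₀ hS₀)
    omega
  · obtain ⟨c, hc⟩ := hH E hE G hG
    rw [mem_inter] at hc
    have hcS : c ∉ S₀ := fun hcS => disjoint_left.1 hGE hc.2 (mem_inter.2 ⟨hc.1, hcS⟩)
    have hcu : c = u := card_le_one.1 (by omega) c (mem_sdiff.2 ⟨hc.1, hcS⟩) u hu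
    exact hcu ▸ hc.2

theorem sdiff_subset_union_of_disjoint (h3 : ∀ E ∈ H, #E = 3)
    (hH : ∀ A ∈ H, ∀ B ∈ H, (A ∩ B).Nonempty)
    (hτ : ∀ T : Finset α, #T ≤ 2 → ∃ E ∈ H, Disjoint E T) (hS₀ : S₀ ∈ H)
    {E F : Finset α} (hE : E ∈ H) (hF : F ∈ H) {w : α} (hEw : E ∩ S₀ = {w})
    (hFw : F ∩ S₀ = {w}) (hEF : Disjoint (E \ S₀) (F \ S₀)) {G : Finset α} (hG : G ∈ H)
    (hG1 : #(G ∩ S₀) = 1) : G \ S₀ ⊆ (E \ S₀) ∪ (F \ S₀) := by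
  have avoid : ∀ K ∈ H, w ∉ K → K \ S₀ ⊆ (E \ S₀) ∪ (F \ S₀) := by
    intro K hK hwK
    have hd : ∀ L, L ∩ S₀ = {w} → Disjoint (K ∩ S₀) (L ∩ S₀) := fun L hL => by
      simp [hL, hwK]
    exact subset_union_of_inter_nonempty (card_sdiff_le_two h3 hH hS₀ hK)
      (sdiff_inter_sdiff_nonempty (hH K hK E hE) (hd E hEw))
      (sdiff_inter_sdiff_nonempty (hH K hK F hF) (hd F hFw))
      (by rw [disjoint_iff_inter_eq_empty.1 hEF]; exact disjoint_empty_left _)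
  by_cases hwG : w ∈ G
  swap
  · exact avoid G hG hwG
  have hwS : w ∈ S₀ := (mem_inter.1 (hEw ▸ mem_singleton_self w)).2
  have hGw : G ∩ S₀ = {w} := by
    obtain ⟨v, hv⟩ := card_eq_one.1 hG1
    rw [hv, mem_singleton.1 (hv ▸ mem_inter.2 ⟨hwG, hwS⟩ : w ∈ ({v} : Finset α))]
  intro a ha
  -- an edge avoiding `w` and the other petal vertex `b` of `G` must pass through `a`
  have h2 : #(G \ S₀) = 2 := by
    have := card_inter_add_card_sdiff G S₀
    rw [h3 G hG] at this
    omega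
  obtain ⟨b, hb, hba⟩ := exists_mem_ne (by omega : 1 < #(G \ S₀)) a
  obtain ⟨K, hK, hKd⟩ := hτ {w, b} card_le_two
  simp only [disjoint_insert_right, disjoint_singleton_right] at hKd
  obtain ⟨c, hc⟩ := hH G hG K hK
  rw [mem_inter] at hc
  have hcS : c ∉ S₀ := fun hcS => by
    have : c ∈ G ∩ S₀ := mem_inter.2 ⟨hc.1, hcS⟩
    rw [hGw, mem_singleton] at this
    exact hKd.1 (this ▸ hc.2)
  have hca : c = a := eq_of_mem_of_card_le_two h2.le hb (mem_sdiff.2 ⟨hc.1, hcS⟩) ha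
    (fun h => hKd.2 (h ▸ hc.2)) hba
  exact avoid K hK hKd.1 (mem_sdiff.2 ⟨hca ▸ hc.2, (mem_sdiff.1 ha).2⟩)

theorem exists_card_le_four_of_forall_mem (h3 : ∀ E ∈ H, #E = 3)
    (hH : ∀ A ∈ H, ∀ B ∈ H, (A ∩ B).Nonempty)
    (hτ : ∀ T : Finset α, #T ≤ 2 → ∃ E ∈ H, Disjoint E T) (hS₀ : S₀ ∈ H) {π : α}
    (hπ : ∀ E ∈ H, #(E ∩ S₀) = 1 → π ∈ E \ S₀) :
    ∃ Θ : Finset α, #Θ ≤ 4 ∧ ∀ E ∈ H, #(E ∩ S₀) = 1 → E \ S₀ ⊆ Θ := by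
  choose G hGH hGd using fun w => hτ {w, π} card_le_two
  simp only [disjoint_insert_right, disjoint_singleton_right] at hGd
  -- `G w` avoids `π`, so it meets `S₀` in at least two points and has at most one outside
  have hGcard : ∀ w, #(G w \ S₀) ≤ 1 := by
    intro w
    have h1 : #(G w ∩ S₀) ≠ 1 := fun h => (hGd w).2 (mem_sdiff.1 (hπ _ (hGH w) h)).1
    have := card_inter_add_card_sdiff (G w) S₀
    have := card_pos.2 (hH _ (hGH w) S₀ hS₀)
    have := h3 _ (hGH w)
    omega
  refine ⟨insert π (S₀.biUnion fun w => G w \ S₀), ?_, ?_⟩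
  · calc #(insert π (S₀.biUnion fun w => G w \ S₀))
        ≤ #(S₀.biUnion fun w => G w \ S₀) + 1 := card_insert_le _ _
      _ ≤ #S₀ * 1 + 1 := by
        gcongr
        exact card_biUnion_le_card_mul _ _ _ fun w _ => hGcard w
      _ = 4 := by rw [h3 S₀ hS₀]
  · intro E hE hE1 c hc
    obtain ⟨w, hw⟩ := card_eq_one.1 hE1
    have hwS : w ∈ S₀ := (mem_inter.1 (hw ▸ mem_singleton_self w)).2
    rcases eq_or_ne π c with rfl | hπc
    · exact mem_insert_self _ _
    obtain ⟨d, hd⟩ := sdiff_inter_sdiff_nonempty (hH E hE _ (hGH w))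
      (by rw [hw, disjoint_singleton_left]; exact fun h => (hGd w).1 (mem_inter.1 h).1)
    rw [mem_inter] at hd
    have hcd : c = d := eq_of_mem_of_card_le_two (card_sdiff_le_two h3 hH hS₀ hE)
      (hπ E hE hE1) hc hd.1 hπc (fun h => (hGd w).2 (h ▸ (mem_sdiff.1 hd.2).1))
    exact mem_insert_of_mem (mem_biUnion.2 ⟨w, hwS, hcd ▸ hd.2⟩)

theorem exists_card_le_four_forall_sdiff_subset (h3 : ∀ E ∈ H, #E = 3)
    (hH : ∀ A ∈ H, ∀ B ∈ H, (A ∩ B).Nonempty)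
    (hτ : ∀ T : Finset α, #T ≤ 2 → ∃ E ∈ H, Disjoint E T) (hS₀ : S₀ ∈ H) :
    ∃ Θ : Finset α, #Θ ≤ 4 ∧ ∀ E ∈ H, #(E ∩ S₀) = 1 → E \ S₀ ⊆ Θ := by
  by_cases hA : ∃ E ∈ H, ∃ F ∈ H, #(E ∩ S₀) = 1 ∧ F ∩ S₀ = E ∩ S₀ ∧
      Disjoint (E \ S₀) (F \ S₀)
  · obtain ⟨E, hE, F, hF, hE1, hFE, hEF⟩ := hA
    obtain ⟨w, hw⟩ := card_eq_one.1 hE1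
    refine ⟨(E \ S₀) ∪ (F \ S₀), ?_, fun G hG hG1 =>
      sdiff_subset_union_of_disjoint h3 hH hτ hS₀ hE hF hw (hFE.trans hw) hEF hG hG1⟩
    have := card_sdiff_le_two h3 hH hS₀ hE
    have := card_sdiff_le_two h3 hH hS₀ hF
    have := card_union_le (E \ S₀) (F \ S₀)
    omega
  push Not at hA
  set P := {E ∈ H | #(E ∩ S₀) = 1}.image (· \ S₀)
  have hmem : ∀ E ∈ H, #(E ∩ S₀) = 1 → E \ S₀ ∈ P := fun E hE hE1 =>
    mem_image_of_mem _ (mem_filter.2 ⟨hE, hE1⟩)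
  have hP2 : ∀ p ∈ P, #p = 2 := by
    simp only [P, mem_image, mem_filter]
    rintro _ ⟨E, ⟨hE, hE1⟩, rfl⟩
    have := card_inter_add_card_sdiff E S₀
    rw [h3 E hE] at this
    omega
  have hP : ∀ p ∈ P, ∀ q ∈ P, (p ∩ q).Nonempty := by
    simp only [P, mem_image, mem_filter]
    rintro _ ⟨E, ⟨hE, hE1⟩, rfl⟩ _ ⟨F, ⟨hF, hF1⟩, rfl⟩
    by_cases hFE : F ∩ S₀ = E ∩ S₀
    · exact not_disjoint_iff_nonempty_inter.1 (hA E hE F hF hE1 hFE)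
    · apply sdiff_inter_sdiff_nonempty (hH E hE F hF)
      obtain ⟨v, hv⟩ := card_eq_one.1 hE1
      obtain ⟨v', hv'⟩ := card_eq_one.1 hF1
      rw [hv, hv'] at hFE ⊢
      simpa [eq_comm] using hFE
  rcases exists_forall_mem_or_card_le_three P hP2 hP with ⟨π, hπ⟩ | ⟨Θ, hΘ, hΘP⟩
  · exact exists_card_le_four_of_forall_mem h3 hH hτ hS₀ fun E hE hE1 => hπ _ (hmem E hE hE1)
  · exact ⟨Θ, by omega, fun E hE hE1 => hΘP _ (hmem E hE hE1)⟩

theorem exists_card_le_seven_forall_subset (h3 : ∀ E ∈ H, #E = 3)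
    (hH : ∀ A ∈ H, ∀ B ∈ H, (A ∩ B).Nonempty)
    (hτ : ∀ T : Finset α, #T ≤ 2 → ∃ E ∈ H, Disjoint E T) :
    ∃ W : Finset α, #W ≤ 7 ∧ ∀ E ∈ H, E ⊆ W := by
  obtain ⟨S₀, hS₀, -⟩ := hτ ∅ (by simp)
  obtain ⟨Θ, hΘ, hΘH⟩ := exists_card_le_four_forall_sdiff_subset h3 hH hτ hS₀
  refine ⟨S₀ ∪ Θ, (card_union_le _ _).trans (by rw [h3 S₀ hS₀]; omega), fun E hE u hu => ?_⟩
  by_cases huS : u ∈ S₀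
  · exact mem_union_left _ huS
  · obtain ⟨E', hE', hE'1, huE'⟩ :=
      exists_mem_card_inter_eq_one h3 hH hτ hS₀ hE (mem_sdiff.2 ⟨hu, huS⟩)
    exact mem_union_right _ (hΘH E' hE' hE'1 (mem_sdiff.2 ⟨huE', huS⟩))

end ThreeUniform

section Counting

variable {α : Type*} [DecidableEq α]

theorem card_filter_subset_le {F : Finset (Finset α)} {U : Finset α} {r : ℕ}
    (hF : F ⊆ U.powersetCard r) (S : Finset α) :
    #{A ∈ F | S ⊆ A} ≤ (#U - #S).choose (r - #S) := by
  rcases {A ∈ F | S ⊆ A}.eq_empty_or_nonempty with h | ⟨A, hA⟩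
  · simp [h]
  obtain ⟨hAF, hSA⟩ := mem_filter.1 hA
  obtain ⟨hAU, hAr⟩ := mem_powersetCard.1 (hF hAF)
  rw [← card_filter_powersetCard_subset S U r (hSA.trans hAU) (hAr ▸ card_le_card hSA)]
  exact card_le_card (filter_subset_filter _ hF)

theorem card_filter_subset_le_mul {F : Finset (Finset α)} {U : Finset α} {r : ℕ}
    (hF : F ⊆ U.powersetCard r) {S T : Finset α} (hST : Disjoint S T)
    (hT : ∀ A ∈ F, S ⊆ A → (A ∩ T).Nonempty) :
    #{A ∈ F | S ⊆ A} ≤ #T * (#U - (#S + 1)).choose (r - (#S + 1)) := by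
  have hsub : {A ∈ F | S ⊆ A} ⊆ T.biUnion fun v => {A ∈ F | insert v S ⊆ A} := by
    intro A hA
    obtain ⟨hAF, hSA⟩ := mem_filter.1 hA
    obtain ⟨v, hv⟩ := hT A hAF hSA
    rw [mem_inter] at hv
    exact mem_biUnion.2 ⟨v, hv.2, mem_filter.2 ⟨hAF, insert_subset hv.1 hSA⟩⟩
  refine (card_le_card hsub).trans (card_biUnion_le_card_mul _ _ _ fun v hv => ?_)
  have := card_filter_subset_le hF (insert v S)
  rwa [card_insert_of_notMem (disjoint_right.1 hST hv)] at this

theorem exists_kernel {F : Finset (Finset α)} {r : ℕ} (hr : ∀ A ∈ F, #A = r)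
    (hF : ∀ A ∈ F, ∀ B ∈ F, (A ∩ B).Nonempty) :
    ∀ k : ℕ, (∀ T : Finset α, #T < k → ∃ A ∈ F, Disjoint A T) →
      ∃ Q : Finset (Finset α), #Q ≤ r ^ k ∧ (∀ q ∈ Q, #q = k) ∧ ∀ A ∈ F, ∃ q ∈ Q, q ⊆ A
  | 0, _ => ⟨{∅}, by simp, by simp, fun _ _ => ⟨∅, mem_singleton_self _, empty_subset _⟩⟩
  | k + 1, hτ => by
    obtain ⟨Q, hQ, hQk, hQF⟩ := exists_kernel hr hF k fun T hT => hτ T (by omega)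
    -- refine each `q ∈ Q` by the vertices of a member of `F` avoiding it
    choose! B hBF hBq using fun q (hq : q ∈ Q) => hτ q (by rw [hQk q hq]; omega)
    refine ⟨Q.biUnion fun q => (B q).image (insert · q), ?_, ?_, ?_⟩
    · calc #(Q.biUnion fun q => (B q).image (insert · q)) ≤ #Q * r :=
          card_biUnion_le_card_mul _ _ _ fun q hq => card_image_le.trans (hr _ (hBF q hq)).le
        _ ≤ r ^ k * r := Nat.mul_le_mul_right _ hQ
        _ = r ^ (k + 1) := (pow_succ r k).symm
    · simp only [mem_biUnion, mem_image]
      rintro _ ⟨q, hq, a, ha, rfl⟩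
      rw [card_insert_of_notMem (disjoint_left.1 (hBq q hq) ha), hQk q hq]
    · intro A hA
      obtain ⟨q, hq, hqA⟩ := hQF A hA
      obtain ⟨a, ha⟩ := hF A hA (B q) (hBF q hq)
      rw [mem_inter] at ha
      exact ⟨insert a q, mem_biUnion.2 ⟨q, hq, mem_image_of_mem _ ha.2⟩, insert_subset ha.1 hqA⟩

end Counting

theorem mul_choose_le_choose_succ {m n k : ℕ} (h : m * (k + 1) ≤ n + 1) :
    m * n.choose k ≤ (n + 1).choose (k + 1) := by
  refine Nat.le_of_mul_le_mul_right ?_ k.succ_pos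
  calc m * n.choose k * (k + 1) = m * (k + 1) * n.choose k := by ring
    _ ≤ (n + 1) * n.choose k := Nat.mul_le_mul_right _ h
    _ = (n + 1).choose (k + 1) * (k + 1) := Nat.add_one_mul_choose_eq n k

section MaxDegree

theorem card_filter_mem_le_maxDeg (F : Finset (Finset ℕ)) (x : ℕ) :
    #{A ∈ F | x ∈ A} ≤ maxDeg F := by
  rcases {A ∈ F | x ∈ A}.eq_empty_or_nonempty with h | ⟨A, hA⟩
  · simp [h]
  · rw [mem_filter] at hA
    exact le_sup (f := fun x => #{E ∈ F | x ∈ E}) (mem_biUnion.2 ⟨A, hA.1, hA.2⟩)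

theorem mul_card_le_mul_maxDeg {F B : Finset (Finset ℕ)} (hB : B ⊆ F) (W : Finset ℕ) {k : ℕ}
    (hk : ∀ A ∈ B, k ≤ #(W ∩ A)) : k * #B ≤ #W * maxDeg F :=
  calc k * #B = ∑ _A ∈ B, k := by rw [sum_const, smul_eq_mul, mul_comm]
    _ ≤ ∑ A ∈ B, #(W ∩ A) := sum_le_sum hk
    _ ≤ #W * maxDeg F := sum_card_inter_le fun x _ =>
      (card_le_card (filter_subset_filter _ hB)).trans (card_filter_mem_le_maxDeg F x)

theorem card_le_mul_maxDeg_add_mul {F Q : Finset (Finset ℕ)} (hQF : ∀ A ∈ F, ∃ S ∈ Q, S ⊆ A)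
    (T : Finset ℕ) (φ : ℕ) (hQT : ∀ S ∈ Q, φ < #{A ∈ F | S ⊆ A} → (S ∩ T).Nonempty) :
    #F ≤ #T * maxDeg F + #Q * φ := by
  set L := {S ∈ Q | #{A ∈ F | S ⊆ A} ≤ φ}
  have hsplit : F ⊆ {A ∈ F | (T ∩ A).Nonempty} ∪ L.biUnion fun S => {A ∈ F | S ⊆ A} := by
    intro A hA
    obtain ⟨S, hS, hSA⟩ := hQF A hA
    by_cases hSφ : #{A ∈ F | S ⊆ A} ≤ φ
    · exact mem_union_right _ (mem_biUnion.2 ⟨S, mem_filter.2 ⟨hS, hSφ⟩, mem_filter.2 ⟨hA, hSA⟩⟩)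
    · obtain ⟨v, hv⟩ := hQT S hS (not_le.1 hSφ)
      rw [mem_inter] at hv
      exact mem_union_left _ (mem_filter.2 ⟨hA, v, mem_inter.2 ⟨hv.2, hSA hv.1⟩⟩)
  have hT : 1 * #{A ∈ F | (T ∩ A).Nonempty} ≤ #T * maxDeg F :=
    mul_card_le_mul_maxDeg (filter_subset _ _) T fun A hA => card_pos.2 (mem_filter.1 hA).2
  have hL : #(L.biUnion fun S => {A ∈ F | S ⊆ A}) ≤ #Q * φ :=
    (card_biUnion_le_card_mul _ _ _ fun S hS => (mem_filter.1 hS).2).trans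
      (Nat.mul_le_mul_right _ (card_le_card (filter_subset _ _)))
  have := (card_le_card hsplit).trans (card_union_le _ _)
  omega

theorem three_mul_card_le_seven_mul_maxDeg_of_forall_inter_nonempty
    {F H : Finset (Finset ℕ)} (h3 : ∀ S ∈ H, #S = 3) (hH : FamIntersecting H)
    (hτ : ∀ T : Finset ℕ, #T ≤ 2 → ∃ S ∈ H, Disjoint S T)
    (hFH : ∀ A ∈ F, ∀ S ∈ H, (A ∩ S).Nonempty) : 3 * #F ≤ 7 * maxDeg F := by
  obtain ⟨W, hW, hHW⟩ := exists_card_le_seven_forall_subset h3 hH hτ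
  -- a member meeting `W` in at most two points would be avoided by some `S ∈ H`, and `S ⊆ W`
  have hWA : ∀ A ∈ F, 3 ≤ #(W ∩ A) := by
    intro A hA
    by_contra! hlt
    obtain ⟨S, hS, hSd⟩ := hτ (W ∩ A) (by omega)
    obtain ⟨v, hv⟩ := hFH A hA S hS
    rw [mem_inter] at hv
    exact disjoint_left.1 hSd hv.2 (mem_inter.2 ⟨hHW S hS hv.2, hv.1⟩)
  calc 3 * #F ≤ #W * maxDeg F := mul_card_le_mul_maxDeg Subset.rfl W hWA
    _ ≤ 7 * maxDeg F := Nat.mul_le_mul_right _ hW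

theorem three_mul_card_le_seven_mul_maxDeg_of_four_le {F : Finset (Finset ℕ)} {U : Finset ℕ}
    {r : ℕ} (hr : 4 ≤ r) (hF : F ⊆ U.powersetCard r) (hFi : FamIntersecting F)
    (hτ : ∀ T : Finset ℕ, #T ≤ 2 → ∃ A ∈ F, Disjoint A T)
    (hlarge : 7 * r ^ 6 * (#U - 4).choose (r - 4) ≤ #F) : 3 * #F ≤ 7 * maxDeg F := by
  have hFr : ∀ A ∈ F, #A = r := fun A hA => (mem_powersetCard.1 (hF hA)).2
  obtain ⟨Q, hQ, hQ3, hQF⟩ := exists_kernel hFr hFi 3 fun T hT => hτ T (by omega)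
  set φ := r ^ 3 * (#U - 4).choose (r - 4)
  set H := {S ∈ Q | φ < #{A ∈ F | S ⊆ A}}
  have hHQ : ∀ S ∈ H, S ∈ Q ∧ φ < #{A ∈ F | S ⊆ A} := fun S hS => mem_filter.1 hS
  -- a heavy triple has too many supersets for all of them to meet a disjoint set of size `≤ r`
  have heavy : ∀ S ∈ H, ∀ T : Finset ℕ, #T ≤ r → Disjoint S T →
      ∃ A ∈ F, S ⊆ A ∧ ¬(A ∩ T).Nonempty := by
    intro S hS T hT hST
    by_contra! hmeet
    have hbound := card_filter_subset_le_mul hF hST hmeet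
    rw [hQ3 S (hHQ S hS).1] at hbound
    have : #T * (#U - 4).choose (r - 4) ≤ φ :=
      Nat.mul_le_mul_right _ (hT.trans (Nat.le_self_pow (by norm_num) r))
    exact (hHQ S hS).2.not_ge (hbound.trans this)
  have hHF : ∀ A ∈ F, ∀ S ∈ H, (A ∩ S).Nonempty := by
    intro A hA S hS
    by_contra hAS
    obtain ⟨B, hB, -, hBA⟩ := heavy S hS A (hFr A hA).le
      (disjoint_iff_inter_eq_empty.2 (by rwa [inter_comm, ← not_nonempty_iff_eq_empty]))
    exact hBA (hFi B hB A hA)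
  have hH : FamIntersecting H := by
    intro S hS S' hS'
    by_contra hSS'
    obtain ⟨B, hB, -, hBS'⟩ := heavy S hS S' (by rw [hQ3 S' (hHQ S' hS').1]; omega)
      (disjoint_iff_inter_eq_empty.2 (not_nonempty_iff_eq_empty.1 hSS'))
    exact hBS' (hHF B hB S' hS')
  by_cases hτH : ∀ T : Finset ℕ, #T ≤ 2 → ∃ S ∈ H, Disjoint S T
  · exact three_mul_card_le_seven_mul_maxDeg_of_forall_inter_nonempty
      (fun S hS => hQ3 S (hHQ S hS).1) hH hτH hHF
  push Not at hτH
  obtain ⟨T, hT, hTH⟩ := hτH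
  have hsplit := card_le_mul_maxDeg_add_mul hQF T φ fun S hS hSφ =>
    not_disjoint_iff_nonempty_inter.1 (hTH S (mem_filter.2 ⟨hS, hSφ⟩))
  have hφ : 7 * (#Q * φ) ≤ #F :=
    calc 7 * (#Q * φ) ≤ 7 * (r ^ 3 * φ) := by gcongr
      _ = 7 * r ^ 6 * (#U - 4).choose (r - 4) := by ring
      _ ≤ #F := hlarge
  have := Nat.mul_le_mul_right (maxDeg F) hT
  omega

theorem three_mul_card_le_seven_mul_maxDeg {F : Finset (Finset ℕ)} {U : Finset ℕ} {r : ℕ}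
    (hr : 3 ≤ r) (hU : 7 * r ^ 7 + 3 ≤ #U) (hF : F ⊆ U.powersetCard r)
    (hFi : FamIntersecting F) (hFc : (#U - 3).choose (r - 3) < #F) :
    3 * #F ≤ 7 * maxDeg F := by
  by_cases hτ : ∀ T : Finset ℕ, #T ≤ 2 → ∃ A ∈ F, Disjoint A T
  · rcases hr.eq_or_lt with rfl | hr4
    · exact three_mul_card_le_seven_mul_maxDeg_of_forall_inter_nonempty
        (fun A hA => (mem_powersetCard.1 (hF hA)).2) hFi hτ hFi
    refine three_mul_card_le_seven_mul_maxDeg_of_four_le hr4 hF hFi hτ (le_of_lt ?_)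
    have hr6 : 7 * r ^ 6 * (r - 4 + 1) ≤ #U - 4 + 1 :=
      calc 7 * r ^ 6 * (r - 4 + 1) ≤ 7 * r ^ 6 * r := by gcongr; omega
        _ = 7 * r ^ 7 := by ring
        _ ≤ #U - 4 + 1 := by omega
    have h4 : 4 ≤ #U := by have := Nat.one_le_pow 7 r (by omega); omega
    have := mul_choose_le_choose_succ hr6
    rw [show #U - 4 + 1 = #U - 3 by omega, show r - 4 + 1 = r - 3 by omega] at this
    exact this.trans_lt hFc
  push Not at hτ
  obtain ⟨T, hT, hTF⟩ := hτ
  have := mul_card_le_mul_maxDeg Subset.rfl T (k := 1) fun A hA =>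
    card_pos.2 (inter_comm A T ▸ not_disjoint_iff_nonempty_inter.1 (hTF A hA))
  have := Nat.mul_le_mul_right (maxDeg F) hT
  omega

end MaxDegree

theorem stmt19 (r : ℕ) (hr : 3 ≤ r) :
    (∀ C : ℝ, 2 ≤ C → C < 7 / 3 → ∃ N : ℕ, ∀ n ≥ N,
      ∀ F ⊆ (Finset.range n).powersetCard r, FamIntersecting F →
        (Nat.choose (n - 3) (r - 3) : ℝ) < F.card →
        (3 * C - 6) / C ≤ (maxDeg F : ℝ) / F.card) ∧
    (∃ N : ℕ, ∀ n ≥ N, ∀ F ⊆ (Finset.range n).powersetCard r, FamIntersecting F →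
        (Nat.choose (n - 3) (r - 3) : ℝ) < F.card →
        (3 / 7 : ℝ) * F.card ≤ maxDeg F) := by
  have key : ∀ n ≥ 7 * r ^ 7 + 3, ∀ F ⊆ (range n).powersetCard r, FamIntersecting F →
      ((n - 3).choose (r - 3) : ℝ) < #F → 3 * (#F : ℝ) ≤ 7 * maxDeg F := by
    intro n hn F hF hFi hFc
    have hU : #(range n) = n := card_range n
    exact_mod_cast three_mul_card_le_seven_mul_maxDeg hr (by rw [hU]; exact hn) hF hFi
      (by rw [hU]; exact_mod_cast hFc)
  refine ⟨fun C hC2 hC => ⟨7 * r ^ 7 + 3, fun n hn F hF hFi hFc => ?_⟩,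
    ⟨7 * r ^ 7 + 3, fun n hn F hF hFi hFc => by linarith [key n hn F hF hFi hFc]⟩⟩
  have hF0 : (0 : ℝ) < #F := (Nat.cast_nonneg _).trans_lt hFc
  calc (3 * C - 6) / C ≤ 3 / 7 := by rw [div_le_div_iff₀ (by linarith) (by norm_num)]; linarith
    _ ≤ maxDeg F / #F := by
      rw [div_le_div_iff₀ (by norm_num) hF0]
      linarith [key n hn F hF hFi hFc]
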